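/- Let σ > 0 and let X and Y be independent real random variables with X Gaussian with mean m₁ and variance σ²/2 and Y Gaussian with mean m₂ and variance σ²/2. Set a = m₁² + m₂². Then for every y ≥ 0, the probability P(X² + Y² ≤ y) equals ∫₀^y (1/σ²) e^{-(x+a)/σ²} I₀( 2√(x a)/σ² ) dx; i.e., X² + Y² has the noncentral chi-squared density (with two degrees of freedom) with noncentrality a. -/

import Mathlib

open MeasureTheory ProbabilityTheory Real

/-- Modified Bessel function of the first kind, order zero: I₀(z) = ∑ (z/2)^{2m}/(m!)². -/
noncomputable def besselI0 (z : ℝ) : ℝ := ∑' m : ℕ, (z / 2) ^ (2 * m) / ((Nat.factorial m : ℝ)) ^ 2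

/-!
In polar coordinates `(r cos θ, r sin θ)` the joint density of `(X, Y)` is
`(π σ²)⁻¹ e^{-(r² + a)/σ²} e^{(2r/σ²)(m₁ cos θ + m₂ sin θ)}`, and writing
`(m₁, m₂) = √a (cos φ, sin φ)` the angular factor integrates to
`∫ e^{z cos (θ - φ)} dθ = 2π I₀(z)` (expand the exponential and integrate `cosⁿ` term by term:
only even powers survive, and `∫₀^{2π} cos^{2m} = 2π (2m)! / (2^{2m} (m!)²)`).
Integrating the resulting radial density over `r ≤ √y` and substituting `x = r²` gives the
noncentral chi-squared density.
-/

open scoped NNReal Nat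

lemma summable_besselI0 (z : ℝ) :
    Summable fun m : ℕ => (z / 2) ^ (2 * m) / (m ! : ℝ) ^ 2 := by
  refine .of_nonneg_of_le (fun m => by rw [pow_mul]; positivity) (fun m => ?_)
    (Real.summable_pow_div_factorial ((z / 2) ^ 2))
  have h1 : (1 : ℝ) ≤ m ! := mod_cast m.factorial_pos
  rw [pow_mul]
  gcongr
  nlinarith

@[fun_prop]
lemma continuous_besselI0 : Continuous besselI0 := by
  refine continuous_iff_continuousAt.2 fun z => ?_
  have hz : z ∈ Set.Ioo (-(|z| + 1)) (|z| + 1) := abs_lt.1 (lt_add_one |z|)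
  refine (continuousOn_tsum (fun m => by fun_prop) (summable_besselI0 (|z| + 1))
    (fun m x hx => ?_)).continuousAt (Ioo_mem_nhds hz.1 hz.2)
  have hx : |x / 2| ≤ (|z| + 1) / 2 := by
    rw [abs_div, abs_two]; gcongr; exact abs_le.2 ⟨hx.1.le, hx.2.le⟩
  rw [Real.norm_eq_abs, abs_div, abs_pow, abs_sq]
  gcongr

lemma integral_cos_pow_even_zero_two_pi (m : ℕ) :
    ∫ θ in (0)..(2 * π), cos θ ^ (2 * m) = 2 * π * ((2 * m)! / (2 ^ (2 * m) * (m ! : ℝ) ^ 2)) := by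
  induction m with
  | zero => simp
  | succ k ih =>
    rw [show 2 * (k + 1) = 2 * k + 2 by ring, integral_cos_pow, ih]
    simp only [sin_two_pi, sin_zero, mul_zero, sub_zero, zero_div, zero_add, Nat.factorial_succ]
    push_cast
    field_simp
    ring

lemma integral_cos_pow_odd_zero_two_pi (m : ℕ) :
    ∫ θ in (0)..(2 * π), cos θ ^ (2 * m + 1) = 0 := by
  simpa [sin_two_pi] using integral_sin_pow_mul_cos_pow_odd (a := 0) (b := 2 * π) 0 m

lemma integral_exp_mul_cos (z : ℝ) :
    ∫ θ in (0)..(2 * π), exp (z * cos θ) = 2 * π * besselI0 z := by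
  have hseries : HasSum (fun n : ℕ => ∫ θ in (0)..(2 * π), (z * cos θ) ^ n / n !)
      (∫ θ in (0)..(2 * π), exp (z * cos θ)) := by
    refine intervalIntegral.hasSum_integral_of_dominated_convergence (fun n _ => |z| ^ n / n !)
      (fun n => by fun_prop) (fun n => ae_of_all _ fun θ _ => ?_)
      (ae_of_all _ fun _ _ => Real.summable_pow_div_factorial |z|) intervalIntegrable_const
      (ae_of_all _ fun θ _ => by
        simpa only [Real.exp_eq_exp_ℝ] using NormedSpace.expSeries_div_hasSum_exp (z * cos θ))
    simp only [norm_div, norm_pow, norm_mul, Real.norm_eq_abs, Nat.abs_cast]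
    gcongr
    exact mul_le_of_le_one_right (abs_nonneg z) (abs_cos_le_one θ)
  have hterm (n : ℕ) : ∫ θ in (0)..(2 * π), (z * cos θ) ^ n / n !
      = z ^ n / n ! * ∫ θ in (0)..(2 * π), cos θ ^ n := by
    rw [← intervalIntegral.integral_const_mul]
    congr 1 with θ
    ring
  have heven (m : ℕ) : z ^ (2 * m) / (2 * m)! * ∫ θ in (0)..(2 * π), cos θ ^ (2 * m)
      = 2 * π * ((z / 2) ^ (2 * m) / (m ! : ℝ) ^ 2) := by
    rw [integral_cos_pow_even_zero_two_pi, div_pow]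
    field_simp
  have hodd (m : ℕ) : z ^ (2 * m + 1) / (2 * m + 1)! * ∫ θ in (0)..(2 * π), cos θ ^ (2 * m + 1)
      = 0 := by
    rw [integral_cos_pow_odd_zero_two_pi, mul_zero]
  simp_rw [hterm] at hseries
  refine hseries.unique ?_
  have := HasSum.even_add_odd (f := fun n => z ^ n / n ! * ∫ θ in (0)..(2 * π), cos θ ^ n)
    (by simpa only [heven] using (summable_besselI0 z).hasSum.mul_left (2 * π))
    (by simpa only [hodd] using hasSum_zero)
  rwa [add_zero] at this

lemma integral_exp_mul_cos_sub (z ψ : ℝ) :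
    ∫ θ in (-π)..π, exp (z * cos (θ - ψ)) = 2 * π * besselI0 z := by
  have hper : Function.Periodic (fun θ => exp (z * cos θ)) (2 * π) := fun θ => by
    simp only [cos_add_two_pi]
  rw [intervalIntegral.integral_comp_sub_right (fun θ => exp (z * cos θ)),
    ← integral_exp_mul_cos, ← zero_add (2 * π), ← hper.intervalIntegral_add_eq (-π - ψ) 0]
  ring_nf

lemma integral_exp_mul_cos_add_sin (c m₁ m₂ : ℝ) :
    ∫ θ in (-π)..π, exp (c * (m₁ * cos θ + m₂ * sin θ))
      = 2 * π * besselI0 (c * √(m₁ ^ 2 + m₂ ^ 2)) := by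
  set w : ℂ := ⟨m₁, m₂⟩
  have hw : ‖w‖ = √(m₁ ^ 2 + m₂ ^ 2) := Complex.norm_eq_sqrt_sq_add_sq w
  have hrot (θ : ℝ) : c * (m₁ * cos θ + m₂ * sin θ) = c * ‖w‖ * cos (θ - w.arg) := by
    have hcos : ‖w‖ * cos w.arg = m₁ := Complex.norm_mul_cos_arg w
    have hsin : ‖w‖ * sin w.arg = m₂ := Complex.norm_mul_sin_arg w
    rw [cos_sub, ← hcos, ← hsin]
    ring
  simp_rw [hrot, ← hw]
  exact integral_exp_mul_cos_sub _ _

section Polar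

variable {E : Type*} [NormedAddCommGroup E] [NormedSpace ℝ E] {f : ℝ × ℝ → E}

lemma integrableOn_polarCoord_target (hf : Integrable f) :
    IntegrableOn (fun p => p.1 • f (polarCoord.symm p)) polarCoord.target := by
  have h := hf.integrableOn (s := polarCoord.source)
  rw [← polarCoord.symm_image_target_eq_source,
    integrableOn_image_iff_integrableOn_abs_det_fderiv_smul volume
      polarCoord.open_target.measurableSet
      (fun p _ => (hasFDerivAt_polarCoord_symm p).hasFDerivWithinAt) polarCoord.symm.injOn] at h
  simp_rw [det_fderivPolarCoordSymm] at h
  exact h.congr_fun (fun p hp => by simp only [abs_of_pos (Set.mem_Ioi.1 hp.1)])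
    polarCoord.open_target.measurableSet

lemma integral_eq_integral_Ioi_integral_Ioo_polarCoord_symm (hf : Integrable f) :
    ∫ p, f p = ∫ r in Set.Ioi 0, ∫ θ in Set.Ioo (-π) π, r • f (polarCoord.symm (r, θ)) := by
  have h := integrableOn_polarCoord_target hf
  rw [polarCoord_target, Measure.volume_eq_prod] at h
  rw [← integral_comp_polarCoord_symm, polarCoord_target, Measure.volume_eq_prod,
    setIntegral_prod _ h]

lemma setIntegral_sq_add_sq_le (hf : Integrable f) (y : ℝ) :
    ∫ p in {p : ℝ × ℝ | p.1 ^ 2 + p.2 ^ 2 ≤ y}, f p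
      = ∫ r in (0)..√y, r • ∫ θ in (-π)..π, f (r * cos θ, r * sin θ) := by
  have hD : MeasurableSet {p : ℝ × ℝ | p.1 ^ 2 + p.2 ^ 2 ≤ y} :=
    measurableSet_le (by fun_prop) measurable_const
  have hdisc (r θ : ℝ) : {p : ℝ × ℝ | p.1 ^ 2 + p.2 ^ 2 ≤ y}.indicator f (polarCoord.symm (r, θ))
      = if r ^ 2 ≤ y then f (r * cos θ, r * sin θ) else 0 := by
    have hr : (r * cos θ) ^ 2 + (r * sin θ) ^ 2 = r ^ 2 := by
      linear_combination r ^ 2 * cos_sq_add_sin_sq θ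
    simp only [Set.indicator_apply, Set.mem_ofPred_eq, polarCoord_symm_apply, hr]
  have hIoc : Set.Ioi (0 : ℝ) ∩ {r | r ^ 2 ≤ y} = Set.Ioc 0 √y := by
    ext r
    simp only [Set.mem_inter_iff, Set.mem_Ioi, Set.mem_ofPred_eq, Set.mem_Ioc]
    exact and_congr_right fun hr => (le_sqrt' hr).symm
  rw [← integral_indicator hD,
    integral_eq_integral_Ioi_integral_Ioo_polarCoord_symm (hf.indicator hD),
    intervalIntegral.integral_of_le (sqrt_nonneg y), ← hIoc,
    ← setIntegral_indicator (measurableSet_le (by fun_prop) measurable_const)]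
  refine setIntegral_congr_fun measurableSet_Ioi fun r _ => ?_
  simp only [hdisc, Set.indicator_apply, Set.mem_ofPred_eq]
  split_ifs
  · rw [intervalIntegral.integral_of_le (by linarith [pi_pos]), integral_Ioc_eq_integral_Ioo,
      integral_smul]
  · simp

end Polar

lemma gaussianPDFReal_mul_gaussianPDFReal (m₁ m₂ : ℝ) (v : ℝ≥0) (x₁ x₂ : ℝ) :
    gaussianPDFReal m₁ v x₁ * gaussianPDFReal m₂ v x₂
      = (2 * π * v)⁻¹ * exp (-((x₁ - m₁) ^ 2 + (x₂ - m₂) ^ 2) / (2 * v)) := by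
  rw [gaussianPDFReal, gaussianPDFReal, mul_mul_mul_comm, ← mul_inv,
    mul_self_sqrt (by positivity), ← exp_add, neg_add, add_div]

lemma integral_gaussianPDFReal_mul_gaussianPDFReal_polar (m₁ m₂ : ℝ) {v : ℝ≥0} (hv : v ≠ 0)
    (r : ℝ) :
    ∫ θ in (-π)..π, gaussianPDFReal m₁ v (r * cos θ) * gaussianPDFReal m₂ v (r * sin θ)
      = (v : ℝ)⁻¹ * exp (-(r ^ 2 + (m₁ ^ 2 + m₂ ^ 2)) / (2 * v))
        * besselI0 (r / v * √(m₁ ^ 2 + m₂ ^ 2)) := by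
  have hv' : (v : ℝ) ≠ 0 := mod_cast hv
  have hexp (θ : ℝ) : gaussianPDFReal m₁ v (r * cos θ) * gaussianPDFReal m₂ v (r * sin θ)
      = (2 * π * v)⁻¹ * exp (-(r ^ 2 + (m₁ ^ 2 + m₂ ^ 2)) / (2 * v))
        * exp (r / v * (m₁ * cos θ + m₂ * sin θ)) := by
    rw [gaussianPDFReal_mul_gaussianPDFReal, mul_assoc _ (rexp _), ← exp_add]
    congr 2
    field_simp
    linear_combination (-r ^ 2) * cos_sq_add_sin_sq θ
  simp_rw [hexp]
  rw [intervalIntegral.integral_const_mul, integral_exp_mul_cos_add_sin]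
  field_simp

lemma measureReal_prod_gaussianReal (m₁ m₂ : ℝ) {v : ℝ≥0} (hv : v ≠ 0) (s : Set (ℝ × ℝ)) :
    ((gaussianReal m₁ v).prod (gaussianReal m₂ v)).real s
      = ∫ p in s, gaussianPDFReal m₁ v p.1 * gaussianPDFReal m₂ v p.2 := by
  rw [gaussianReal_of_var_ne_zero _ hv, gaussianReal_of_var_ne_zero _ hv,
    prod_withDensity (measurable_gaussianPDF _ _) (measurable_gaussianPDF _ _), measureReal_def,
    withDensity_apply' _ s, ← Measure.volume_eq_prod]
  have hnonneg (p : ℝ × ℝ) : 0 ≤ gaussianPDFReal m₁ v p.1 * gaussianPDFReal m₂ v p.2 :=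
    mul_nonneg (gaussianPDFReal_nonneg _ _ _) (gaussianPDFReal_nonneg _ _ _)
  simp only [gaussianPDF, ← ENNReal.ofReal_mul (gaussianPDFReal_nonneg _ _ _)]
  rw [← ofReal_integral_eq_lintegral_ofReal _ (ae_of_all _ hnonneg),
    ENNReal.toReal_ofReal (integral_nonneg hnonneg), Measure.volume_eq_prod]
  exact ((integrable_gaussianPDFReal _ _).mul_prod (integrable_gaussianPDFReal _ _)).restrict

theorem measureReal_sq_add_sq_le_of_indepFun_gaussianReal {Ω : Type*} [MeasurableSpace Ω]
    {μ : Measure Ω} [IsFiniteMeasure μ] {X Y : Ω → ℝ} (hX : Measurable X) (hY : Measurable Y)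
    (hindep : IndepFun X Y μ) {m₁ m₂ : ℝ} {v : ℝ≥0} (hv : v ≠ 0)
    (hXlaw : μ.map X = gaussianReal m₁ v) (hYlaw : μ.map Y = gaussianReal m₂ v)
    {y : ℝ} (hy : 0 ≤ y) :
    μ.real {ω | X ω ^ 2 + Y ω ^ 2 ≤ y}
      = ∫ x in (0)..y, (2 * (v : ℝ))⁻¹ * exp (-(x + (m₁ ^ 2 + m₂ ^ 2)) / (2 * v))
          * besselI0 (√(x * (m₁ ^ 2 + m₂ ^ 2)) / v) := by
  set g : ℝ → ℝ := fun x => (2 * (v : ℝ))⁻¹ * exp (-(x + (m₁ ^ 2 + m₂ ^ 2)) / (2 * v))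
    * besselI0 (√(x * (m₁ ^ 2 + m₂ ^ 2)) / v)
  have hlaw : μ.map (fun ω => (X ω, Y ω)) = (gaussianReal m₁ v).prod (gaussianReal m₂ v) := by
    rw [← hXlaw, ← hYlaw]
    exact hindep.map_prod_eq_prod_map_map hX.aemeasurable hY.aemeasurable
  have hpolar (r : ℝ) (hr : r ∈ Set.uIcc 0 √y) :
      r • ∫ θ in (-π)..π, gaussianPDFReal m₁ v (r * cos θ) * gaussianPDFReal m₂ v (r * sin θ)
        = (g ∘ fun r => r ^ 2) r * (2 * r) := by
    have hr : 0 ≤ r := (Set.uIcc_of_le (sqrt_nonneg y) ▸ hr).1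
    rw [integral_gaussianPDFReal_mul_gaussianPDFReal_polar m₁ m₂ hv, Function.comp_apply]
    simp only [g]
    rw [sqrt_mul (sq_nonneg r), sqrt_sq hr, smul_eq_mul]
    ring_nf
  calc μ.real {ω | X ω ^ 2 + Y ω ^ 2 ≤ y}
      = (μ.map fun ω => (X ω, Y ω)).real {p : ℝ × ℝ | p.1 ^ 2 + p.2 ^ 2 ≤ y} := by
        rw [map_measureReal_apply (hX.prodMk hY) (measurableSet_le (by fun_prop) measurable_const)]
        rfl
    _ = ∫ r in (0)..√y, r • ∫ θ in (-π)..π,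
          gaussianPDFReal m₁ v (r * cos θ) * gaussianPDFReal m₂ v (r * sin θ) := by
        rw [hlaw, measureReal_prod_gaussianReal m₁ m₂ hv, setIntegral_sq_add_sq_le
          ((integrable_gaussianPDFReal m₁ v).mul_prod (integrable_gaussianPDFReal m₂ v))]
    _ = ∫ x in (0)..y, g x := by
        rw [intervalIntegral.integral_congr hpolar, intervalIntegral.integral_comp_mul_deriv
          (fun r _ => by simpa using hasDerivAt_pow 2 r) (by fun_prop) (by fun_prop)]
        simp [sq_sqrt hy]

/-- The sum of squares of two independent Gaussians with common variance σ²/2 has the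
noncentral chi-squared density with noncentrality a = m₁² + m₂². -/
theorem stmt3 {Ω : Type*} [MeasureSpace Ω] [IsProbabilityMeasure (ℙ : Measure Ω)]
    (σ m₁ m₂ : ℝ) (hσ : 0 < σ) (X Y : Ω → ℝ) (hX : Measurable X) (hY : Measurable Y)
    (hXlaw : Measure.map X ℙ = gaussianReal m₁ (Real.toNNReal (σ ^ 2 / 2)))
    (hYlaw : Measure.map Y ℙ = gaussianReal m₂ (Real.toNNReal (σ ^ 2 / 2)))
    (hindep : IndepFun X Y ℙ) (y : ℝ) (hy : 0 ≤ y) :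
    (ℙ {ω | X ω ^ 2 + Y ω ^ 2 ≤ y}).toReal
      = ∫ x in (0:ℝ)..y, (1 / σ ^ 2) * Real.exp (-(x + (m₁ ^ 2 + m₂ ^ 2)) / σ ^ 2) *
          besselI0 (2 * Real.sqrt (x * (m₁ ^ 2 + m₂ ^ 2)) / σ ^ 2) := by
  have hσ2 : 0 < σ ^ 2 / 2 := by positivity
  rw [← measureReal_def, measureReal_sq_add_sq_le_of_indepFun_gaussianReal hX hY hindep
    (toNNReal_pos.2 hσ2).ne' hXlaw hYlaw hy, coe_toNNReal _ hσ2.le]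
  congr 1 with x
  ring_nf
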